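/- arXiv:2603.12697 — 2 statements merged into one kernel-verified Lean document; each statement's English description precedes it below -/
import Mathlib

section
/- For any fixed φ ∈ ℝ, the identity F'(P⃗) = e^{iφ} F(P⃗) holds for all P⃗ ∈ 𝒫^m if and only if W(P⃗)^† W'(P⃗) = e^{iφ} C_{m:0} (C'_{m:0})^† holds for all P⃗ ∈ 𝒫^m. -/
open Matrix Complex

noncomputable section

namespace QEC

/-- The space of `n`-qubit operators: `2^n × 2^n` complex matrices, with the
index set realized as `Fin n → Fin 2`. -/
abbrev QMat (n : ℕ) := Matrix (Fin n → Fin 2) (Fin n → Fin 2) ℂ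

/-- The Pauli `X` matrix. -/
def PX : Matrix (Fin 2) (Fin 2) ℂ := !![0, 1; 1, 0]

/-- The Pauli `Y` matrix. -/
def PY : Matrix (Fin 2) (Fin 2) ℂ := !![0, -Complex.I; Complex.I, 0]

/-- The Pauli `Z` matrix. -/
def PZ : Matrix (Fin 2) (Fin 2) ℂ := !![1, 0; 0, -1]

/-- The four single-qubit Pauli matrices `𝒫 = {I, X, Y, Z}`, indexed by `Fin 4`. -/
def pauli : Fin 4 → Matrix (Fin 2) (Fin 2) ℂ := ![1, PX, PY, PZ]

/-- `A^{(k)} = I^{⊗(k-1)} ⊗ A ⊗ I^{⊗(n-k)}`: the single-qubit operator `A`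
acting on the `k`-th qubit of an `n`-qubit system. -/
def embed {n : ℕ} (k : Fin n) (A : Matrix (Fin 2) (Fin 2) ℂ) : QMat n :=
  fun x y => A (x k) (y k) * ∏ q ∈ Finset.univ.erase k, (if x q = y q then (1 : ℂ) else 0)

/-- The Kronecker product `P 0 ⊗ P 1 ⊗ ⋯ ⊗ P (n-1)` of `n` single-qubit operators. -/
def kron {n : ℕ} (P : Fin n → Matrix (Fin 2) (Fin 2) ℂ) : QMat n :=
  fun x y => ∏ q, P q (x q) (y q)

/-- The circuit `F(A⃗) = C_m A_m^{(k_m)} C_{m-1} ⋯ C_1 A_1^{(k_1)} C_0`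
(here the layers are indexed by `Fin m`, with `i : Fin m` standing for layer `i+1`). -/
def circuit {n m : ℕ} (C : Fin (m + 1) → QMat n) (k : Fin m → Fin n)
    (A : Fin m → Matrix (Fin 2) (Fin 2) ℂ) : QMat n :=
  ((List.ofFn fun i : Fin m => C i.succ * embed (k i) (A i)).reverse).prod * C 0

/-- The cumulative product `C_{m:i} = C_m C_{m-1} ⋯ C_i`. -/
def Ccum {n m : ℕ} (C : Fin (m + 1) → QMat n) (i : Fin (m + 1)) : QMat n :=
  (((List.ofFn C).reverse).take (m + 1 - (i : ℕ))).prod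

/-- `V_i(P) = C_{m:i} P^{(k_i)} C_{m:i}^†` (with `i : Fin m` standing for layer `i+1`). -/
def Vop {n m : ℕ} (C : Fin (m + 1) → QMat n) (k : Fin m → Fin n) (i : Fin m)
    (P : Matrix (Fin 2) (Fin 2) ℂ) : QMat n :=
  Ccum C i.succ * embed (k i) P * (Ccum C i.succ)ᴴ

/-- `W(P⃗) = V_m(P_m) V_{m-1}(P_{m-1}) ⋯ V_1(P_1)`. -/
def Wop {n m : ℕ} (C : Fin (m + 1) → QMat n) (k : Fin m → Fin n)
    (P : Fin m → Matrix (Fin 2) (Fin 2) ℂ) : QMat n :=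
  ((List.ofFn fun i : Fin m => Vop C k i (P i)).reverse).prod

/-- The global phase `e^{iφ}`. -/
def phase (φ : ℝ) : ℂ := Complex.exp ((φ : ℂ) * Complex.I)

/-- A unitary `C` is Clifford when it maps every Pauli string to a signed Pauli
string under conjugation. -/
def IsClifford {n : ℕ} (C : QMat n) : Prop :=
  ∀ Q : Fin n → Fin 4, ∃ (ε : ℂ) (Q' : Fin n → Fin 4), (ε = 1 ∨ ε = -1) ∧
    C * kron (fun q => pauli (Q q)) * Cᴴ = ε • kron (fun q => pauli (Q' q))

/-!
Conjugating the inserted Paulis by the cumulative products telescopes: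
`W(P⃗) C_{m:0} = F(P⃗)`, since each `C_{m:i}^† C_{m:i}` cancels. Peeling off the innermost layer
`C_0` leaves the conjugators `C_{m:i}`, `i ≥ 1`, of the remaining layers unchanged, so this is an
induction on `m`. As `W(P⃗)` and `C'_{m:0}` are unitary, `W'(P⃗) C'_{m:0} = e^{iφ} W(P⃗) C_{m:0}`
is then equivalent to `W(P⃗)^† W'(P⃗) = e^{iφ} C_{m:0} C'_{m:0}^†`.
-/

section StarMonoid

variable {M 𝕜 : Type*} [Monoid M] [StarMul M] [SMul 𝕜 M] [IsScalarTower 𝕜 M M]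
  [SMulCommClass 𝕜 M M]

theorem mul_eq_smul_mul_iff_star_mul_eq {w g g' : M} (hw : w ∈ unitary M)
    (hg' : g' ∈ unitary M) (w' : M) (c : 𝕜) :
    w' * g' = c • (w * g) ↔ star w * w' = c • (g * star g') := by
  constructor
  · intro h
    calc star w * w' = star w * (w' * g') * star g' := by
          rw [mul_assoc, mul_assoc, Unitary.mul_star_self_of_mem hg', mul_one]
      _ = c • (g * star g') := by
          rw [h, mul_smul_comm, smul_mul_assoc, ← mul_assoc, Unitary.star_mul_self_of_mem hw,
            one_mul]
  · intro h
    calc w' * g' = w * (star w * w') * g' := by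
          rw [← mul_assoc, Unitary.mul_star_self_of_mem hw, one_mul]
      _ = c • (w * g) := by
          rw [h, mul_smul_comm, smul_mul_assoc, mul_assoc, mul_assoc,
            Unitary.star_mul_self_of_mem hg', mul_one]

end StarMonoid

theorem pauli_mem_unitaryGroup (j : Fin 4) : pauli j ∈ unitaryGroup (Fin 2) ℂ := by
  rw [mem_unitaryGroup_iff', star_eq_conjTranspose]
  fin_cases j <;>
  · ext a b
    fin_cases a <;> fin_cases b <;>
      simp [pauli, PX, PY, PZ, mul_apply, Fin.sum_univ_two, one_apply]

section Kron

variable {n : ℕ}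

theorem kron_one : kron (1 : Fin n → Matrix (Fin 2) (Fin 2) ℂ) = 1 := by
  ext x y
  simp only [kron, Pi.one_apply, one_apply]
  split_ifs with h
  · simp [h]
  · obtain ⟨q, hq⟩ := Function.ne_iff.mp h
    exact Finset.prod_eq_zero (Finset.mem_univ q) (if_neg hq)

theorem kron_mul (P Q : Fin n → Matrix (Fin 2) (Fin 2) ℂ) : kron P * kron Q = kron (P * Q) := by
  ext x y
  simp only [kron, mul_apply, Pi.mul_apply, ← Finset.prod_mul_distrib]
  exact (Fintype.prod_sum fun q j => P q (x q) j * Q q j (y q)).symm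

theorem star_kron (P : Fin n → Matrix (Fin 2) (Fin 2) ℂ) : star (kron P) = kron (star P) := by
  ext x y
  simp [kron]

theorem kron_mem_unitaryGroup {P : Fin n → Matrix (Fin 2) (Fin 2) ℂ}
    (hP : ∀ q, P q ∈ unitaryGroup (Fin 2) ℂ) : kron P ∈ unitaryGroup (Fin n → Fin 2) ℂ := by
  rw [mem_unitaryGroup_iff', star_kron, kron_mul]
  convert kron_one
  exact funext fun q => Unitary.star_mul_self_of_mem (hP q)

theorem embed_eq_kron_mulSingle (k : Fin n) (A : Matrix (Fin 2) (Fin 2) ℂ) :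
    embed k A = kron (Pi.mulSingle k A) := by
  ext x y
  rw [kron, embed, ← Finset.prod_erase_mul _ _ (Finset.mem_univ k), Pi.mulSingle_eq_same,
    mul_comm]
  congr 1
  refine Finset.prod_congr rfl fun q hq => ?_
  rw [Pi.mulSingle_eq_of_ne (Finset.ne_of_mem_erase hq), one_apply]

theorem embed_mem_unitaryGroup (k : Fin n) {A : Matrix (Fin 2) (Fin 2) ℂ}
    (hA : A ∈ unitaryGroup (Fin 2) ℂ) : embed k A ∈ unitaryGroup (Fin n → Fin 2) ℂ := by
  rw [embed_eq_kron_mulSingle]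
  refine kron_mem_unitaryGroup fun q => ?_
  by_cases hq : q = k
  · subst hq; rwa [Pi.mulSingle_eq_same]
  · rw [Pi.mulSingle_eq_of_ne hq]; exact one_mem _

end Kron

section Circuit

variable {n m : ℕ}

theorem Ccum_mem_unitaryGroup {C : Fin (m + 1) → QMat n}
    (hC : ∀ i, C i ∈ unitaryGroup (Fin n → Fin 2) ℂ) (i : Fin (m + 1)) :
    Ccum C i ∈ unitaryGroup (Fin n → Fin 2) ℂ := by
  refine Submonoid.list_prod_mem _ fun x hx => ?_
  obtain ⟨j, rfl⟩ := List.mem_ofFn.mp (List.mem_reverse.mp (List.mem_of_mem_take hx))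
  exact hC j

theorem Ccum_succ (C : Fin (m + 2) → QMat n) (i : Fin (m + 1)) :
    Ccum C i.succ = Ccum (Fin.tail C) i := by
  rw [Ccum, Ccum, List.ofFn_succ, List.reverse_cons,
    List.take_append_of_le_length (by simp), Fin.val_succ, Nat.add_sub_add_right]
  rfl

theorem Ccum_zero_succ (C : Fin (m + 2) → QMat n) :
    Ccum C 0 = Ccum (Fin.tail C) 0 * C 0 := by
  rw [Ccum, Ccum, List.ofFn_succ, List.reverse_cons]
  simp [Fin.tail]

theorem Wop_succ (C : Fin (m + 2) → QMat n) (k : Fin (m + 1) → Fin n)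
    (A : Fin (m + 1) → Matrix (Fin 2) (Fin 2) ℂ) :
    Wop C k A = Wop (Fin.tail C) (Fin.tail k) (Fin.tail A) *
      (Ccum (Fin.tail C) 0 * embed (k 0) (A 0) * (Ccum (Fin.tail C) 0)ᴴ) := by
  simp only [Wop, Vop, List.ofFn_succ, List.reverse_cons, List.prod_append, List.prod_singleton,
    Ccum_succ]
  rfl

theorem circuit_succ (C : Fin (m + 2) → QMat n) (k : Fin (m + 1) → Fin n)
    (A : Fin (m + 1) → Matrix (Fin 2) (Fin 2) ℂ) :
    circuit C k A = circuit (Fin.tail C) (Fin.tail k) (Fin.tail A) * embed (k 0) (A 0) * C 0 := by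
  simp only [circuit, List.ofFn_succ, List.reverse_cons, List.prod_append, List.prod_singleton,
    mul_assoc]
  rfl

theorem Wop_mul_Ccum_zero {C : Fin (m + 1) → QMat n}
    (hC : ∀ i, C i ∈ unitaryGroup (Fin n → Fin 2) ℂ) (k : Fin m → Fin n)
    (A : Fin m → Matrix (Fin 2) (Fin 2) ℂ) :
    Wop C k A * Ccum C 0 = circuit C k A := by
  induction m with
  | zero => simp [Wop, Ccum, circuit]
  | succ m ih =>
    have hC₁ : ∀ i, Fin.tail C i ∈ unitaryGroup (Fin n → Fin 2) ℂ := fun i => hC i.succ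
    have hG := Unitary.star_mul_self_of_mem (Ccum_mem_unitaryGroup hC₁ 0)
    rw [star_eq_conjTranspose] at hG
    rw [Wop_succ, Ccum_zero_succ, circuit_succ, ← ih hC₁]
    simp only [mul_assoc]
    rw [← mul_assoc (Ccum (Fin.tail C) 0)ᴴ, hG, one_mul]

theorem Wop_mem_unitaryGroup {C : Fin (m + 1) → QMat n}
    (hC : ∀ i, C i ∈ unitaryGroup (Fin n → Fin 2) ℂ) (k : Fin m → Fin n)
    {A : Fin m → Matrix (Fin 2) (Fin 2) ℂ} (hA : ∀ i, A i ∈ unitaryGroup (Fin 2) ℂ) :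
    Wop C k A ∈ unitaryGroup (Fin n → Fin 2) ℂ := by
  refine Submonoid.list_prod_mem _ fun x hx => ?_
  obtain ⟨i, rfl⟩ := List.mem_ofFn.mp (List.mem_reverse.mp hx)
  have hG := Ccum_mem_unitaryGroup hC i.succ
  rw [Vop, ← star_eq_conjTranspose]
  exact mul_mem (mul_mem hG (embed_mem_unitaryGroup _ (hA i))) (Unitary.star_mem hG)

end Circuit

theorem stmt4_general (n m : ℕ)
    (C C' : Fin (m + 1) → QMat n)
    (hC : ∀ i, C i ∈ Matrix.unitaryGroup (Fin n → Fin 2) ℂ)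
    (hC' : ∀ i, C' i ∈ Matrix.unitaryGroup (Fin n → Fin 2) ℂ)
    (k l : Fin m → Fin n) (φ : ℝ) :
    (∀ p : Fin m → Fin 4,
        circuit C' l (fun i => pauli (p i)) = phase φ • circuit C k (fun i => pauli (p i))) ↔
    (∀ p : Fin m → Fin 4,
        (Wop C k (fun i => pauli (p i)))ᴴ * Wop C' l (fun i => pauli (p i)) =
          phase φ • (Ccum C 0 * (Ccum C' 0)ᴴ)) := by
  refine forall_congr' fun p => ?_
  rw [← Wop_mul_Ccum_zero hC, ← Wop_mul_Ccum_zero hC', ← star_eq_conjTranspose,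
    ← star_eq_conjTranspose]
  exact mul_eq_smul_mul_iff_star_mul_eq
    (Wop_mem_unitaryGroup hC k fun i => pauli_mem_unitaryGroup (p i))
    (Ccum_mem_unitaryGroup hC' 0) _ _

/-- For a fixed phase `φ`, `F'(P⃗) = e^{iφ} F(P⃗)` for all `P⃗ ∈ 𝒫^m` iff
`W(P⃗)^† W'(P⃗) = e^{iφ} C_{m:0} (C'_{m:0})^†` for all `P⃗ ∈ 𝒫^m`. -/
theorem stmt4 (n m : ℕ) (hn : 1 ≤ n) (hm : 1 ≤ m)
    (C C' : Fin (m + 1) → QMat n)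
    (hC : ∀ i, C i ∈ Matrix.unitaryGroup (Fin n → Fin 2) ℂ)
    (hC' : ∀ i, C' i ∈ Matrix.unitaryGroup (Fin n → Fin 2) ℂ)
    (k l : Fin m → Fin n) (φ : ℝ) :
    (∀ p : Fin m → Fin 4,
        circuit C' l (fun i => pauli (p i)) = phase φ • circuit C k (fun i => pauli (p i))) ↔
    (∀ p : Fin m → Fin 4,
        (Wop C k (fun i => pauli (p i)))ᴴ * Wop C' l (fun i => pauli (p i)) =
          phase φ • (Ccum C 0 * (Ccum C' 0)ᴴ)) :=
  stmt4_general n m C C' hC hC' k l φ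

end QEC
end
end

section
/- Suppose φ ∈ ℝ is such that F'(P⃗) = e^{iφ} F(P⃗) for all Pauli substitutions P⃗ ∈ 𝒫^m. Then for every fixed sequence U⃗ = (U_1,…,U_m) of 2×2 unitary matrices, F'(U⃗) = e^{iφ} F(U⃗). -/
open Matrix Complex

noncomputable section

namespace QEC

/-- Linearity of the reversed `List.ofFn` product in any one slot. -/
lemma ofFn_reverse_prod_update {n : ℕ} : ∀ (m : ℕ) (f : Fin m → QMat n) (t : Fin m)
    (a b : ℂ) (M N : QMat n),
    (List.ofFn (Function.update f t (a • M + b • N))).reverse.prod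
      = a • (List.ofFn (Function.update f t M)).reverse.prod
        + b • (List.ofFn (Function.update f t N)).reverse.prod := by
  intro m
  induction m with
  | zero => exact fun f t => t.elim0
  | succ m ih =>
    intro f t a b M N
    have hrev : ∀ g : Fin (m + 1) → QMat n,
        (List.ofFn g).reverse.prod = (List.ofFn fun i : Fin m => g i.succ).reverse.prod * g 0 := by
      intro g
      rw [List.ofFn_succ, List.reverse_cons, List.prod_append, List.prod_singleton]
    rcases Fin.eq_zero_or_eq_succ t with h0 | ⟨t', rfl⟩
    · subst h0
      rw [hrev, hrev, hrev]
      have htail : ∀ X : QMat n,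
          (fun i : Fin m => Function.update f 0 X i.succ) = fun i => f i.succ := by
        intro X; funext i
        rw [Function.update_of_ne (Fin.succ_ne_zero i)]
      rw [htail, htail, htail, Function.update_self, Function.update_self,
        Function.update_self, mul_add, mul_smul_comm, mul_smul_comm]
    · rw [hrev, hrev, hrev]
      have hhead : ∀ X : QMat n, Function.update f t'.succ X 0 = f 0 := by
        intro X; rw [Function.update_of_ne (Fin.succ_ne_zero t').symm]
      have htail : ∀ X : QMat n,
          (fun i : Fin m => Function.update f t'.succ X i.succ)
            = Function.update (fun i : Fin m => f i.succ) t' X := by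
        intro X; funext i
        by_cases hi : i = t'
        · subst hi; rw [Function.update_self, Function.update_self]
        · rw [Function.update_of_ne hi, Function.update_of_ne (fun hc => hi (Fin.succ_injective _ hc))]
      rw [hhead, hhead, hhead, htail, htail, htail, ih]
      rw [add_mul, smul_mul_assoc, smul_mul_assoc]

/-- `embed` is linear. -/
lemma embed_linear {n : ℕ} (k : Fin n) (a b : ℂ) (M N : Matrix (Fin 2) (Fin 2) ℂ) :
    embed k (a • M + b • N) = a • embed k M + b • embed k N := by
  ext x y
  simp only [embed, Matrix.add_apply, Matrix.smul_apply, smul_eq_mul]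
  ring

/-- `circuit` is linear in each slot. -/
lemma circuit_update_linear {n m : ℕ} (C : Fin (m + 1) → QMat n) (k : Fin m → Fin n)
    (A : Fin m → Matrix (Fin 2) (Fin 2) ℂ) (t : Fin m) (a b : ℂ)
    (M N : Matrix (Fin 2) (Fin 2) ℂ) :
    circuit C k (Function.update A t (a • M + b • N))
      = a • circuit C k (Function.update A t M) + b • circuit C k (Function.update A t N) := by
  have key : ∀ X : Matrix (Fin 2) (Fin 2) ℂ,
      (fun i : Fin m => C i.succ * embed (k i) (Function.update A t X i))
        = Function.update (fun i : Fin m => C i.succ * embed (k i) (A i)) t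
            (C t.succ * embed (k t) X) := by
    intro X; funext i
    by_cases hi : i = t
    · subst hi; rw [Function.update_self, Function.update_self]
    · rw [Function.update_of_ne hi, Function.update_of_ne hi]
  unfold circuit
  rw [key, key, key, embed_linear, mul_add, mul_smul_comm, mul_smul_comm,
    ofFn_reverse_prod_update, add_mul, smul_mul_assoc, smul_mul_assoc]

/-- `circuit` of a zero slot is zero. -/
lemma circuit_update_zero {n m : ℕ} (C : Fin (m + 1) → QMat n) (k : Fin m → Fin n)
    (A : Fin m → Matrix (Fin 2) (Fin 2) ℂ) (t : Fin m) :
    circuit C k (Function.update A t 0) = 0 := by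
  have := circuit_update_linear C k A t 1 (-1) 0 0
  simpa using this

/-- `circuit` applied to a finite linear combination in one slot. -/
lemma circuit_update_sum {n m : ℕ} (C : Fin (m + 1) → QMat n) (k : Fin m → Fin n)
    (A : Fin m → Matrix (Fin 2) (Fin 2) ℂ) (t : Fin m)
    (s : Finset (Fin 4)) (c : Fin 4 → ℂ) (M : Fin 4 → Matrix (Fin 2) (Fin 2) ℂ) :
    circuit C k (Function.update A t (∑ j ∈ s, c j • M j))
      = ∑ j ∈ s, c j • circuit C k (Function.update A t (M j)) := by
  induction s using Finset.induction with
  | empty => simpa using circuit_update_zero C k A t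
  | @insert j s hj ih =>
    rw [Finset.sum_insert hj, Finset.sum_insert hj, ← ih]
    have := circuit_update_linear C k A t (c j) 1 (M j) (∑ x ∈ s, c x • M x)
    simpa using this

/-- Every 2×2 matrix is a linear combination of the four Paulis. -/
lemma pauli_span (M : Matrix (Fin 2) (Fin 2) ℂ) : ∃ c : Fin 4 → ℂ, M = ∑ j, c j • pauli j := by
  refine ⟨![(M 0 0 + M 1 1) / 2, (M 0 1 + M 1 0) / 2,
    (M 0 1 - M 1 0) * Complex.I / 2, (M 0 0 - M 1 1) / 2], ?_⟩
  ext i j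
  have hI := Complex.I_mul_I
  fin_cases i <;> fin_cases j <;>
    simp [pauli, PX, PY, PZ, Fin.sum_univ_four, Matrix.sum_apply, Matrix.smul_apply,
      Matrix.one_apply] <;>
    ring_nf <;> rw [Complex.I_sq] <;> ring

/-- If `φ` is such that `F'(P⃗) = e^{iφ} F(P⃗)` for all Pauli substitutions
`P⃗ ∈ 𝒫^m`, then `F'(U⃗) = e^{iφ} F(U⃗)` for every fixed sequence of 2×2 unitaries. -/
theorem stmt8 (n m : ℕ) (hn : 1 ≤ n) (hm : 1 ≤ m)
    (C C' : Fin (m + 1) → QMat n)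
    (hC : ∀ i, C i ∈ Matrix.unitaryGroup (Fin n → Fin 2) ℂ)
    (hC' : ∀ i, C' i ∈ Matrix.unitaryGroup (Fin n → Fin 2) ℂ)
    (k l : Fin m → Fin n) (φ : ℝ)
    (h : ∀ p : Fin m → Fin 4,
        circuit C' l (fun i => pauli (p i)) = phase φ • circuit C k (fun i => pauli (p i))) :
    ∀ U : Fin m → Matrix (Fin 2) (Fin 2) ℂ,
      (∀ i, U i ∈ Matrix.unitaryGroup (Fin 2) ℂ) →
      circuit C' l U = phase φ • circuit C k U := by
  have key : ∀ t : ℕ, t ≤ m → ∀ A : Fin m → Matrix (Fin 2) (Fin 2) ℂ,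
      (∀ i : Fin m, t ≤ (i : ℕ) → ∃ j, A i = pauli j) →
      circuit C' l A = phase φ • circuit C k A := by
    intro t
    induction t with
    | zero =>
      intro _ A hA
      have hp : ∀ i, A i = pauli ((hA i (Nat.zero_le _)).choose) :=
        fun i => (hA i (Nat.zero_le _)).choose_spec
      have hAeq : A = fun i => pauli ((hA i (Nat.zero_le _)).choose) := funext hp
      rw [hAeq]
      exact h _
    | succ t ih =>
      intro ht A hA
      have htm : t < m := ht
      set tf : Fin m := ⟨t, htm⟩ with htf
      obtain ⟨c, hc⟩ := pauli_span (A tf)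
      have hAeq : A = Function.update A tf (∑ j, c j • pauli j) := by
        rw [← hc, Function.update_eq_self]
      rw [hAeq, circuit_update_sum, circuit_update_sum, Finset.smul_sum]
      refine Finset.sum_congr rfl fun j _ => ?_
      rw [smul_comm]
      congr 1
      refine ih (Nat.le_of_succ_le ht) _ fun i hi => ?_
      by_cases hit : i = tf
      · subst hit; rw [Function.update_self]; exact ⟨j, rfl⟩
      · rw [Function.update_of_ne hit]
        refine hA i ?_
        rcases Nat.lt_or_ge (i : ℕ) (t + 1) with hlt | hge
        · exact absurd (Fin.ext (Nat.le_antisymm (Nat.lt_succ_iff.mp hlt) hi) : i = tf) hit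
        · exact hge
  intro U _
  exact key m le_rfl U fun i hi => absurd hi (Nat.not_le.mpr i.isLt)


end QEC
end
end
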